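/- The set of integer vectors x ∈ ℤ⁹ that satisfy the hexagon relations and have ∂(x) = (0,0,0) is exactly the set of integer multiples of v; that is, {x ∈ ℤ⁹ : a₂+a₃ = b₃+c₂, b₂+b₃ = c₃+a₂, c₂+c₃ = a₃+b₂, ∂(x) = 0} = {ℓ·v : ℓ ∈ ℤ}. -/

import Mathlib

/-- The hexagon relations on a point of `ℤ⁹` with coordinates
`(a₁,b₁,c₁,a₂,a₃,b₂,b₃,c₂,c₃)` (indices `0,…,8`):
`a₂+a₃ = b₃+c₂`, `b₂+b₃ = c₃+a₂`, `c₂+c₃ = a₃+b₂`. -/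
def hex (x : Fin 9 → ℤ) : Prop :=
  x 3 + x 4 = x 6 + x 7 ∧ x 5 + x 6 = x 8 + x 3 ∧ x 7 + x 8 = x 4 + x 5

/-- The boundary map `∂ : ℤ⁹ → (ℤ²)³`,
`∂(Q) = ((a₁+a₂, a₃+b₁), (b₁+b₂, b₃+c₁), (c₁+c₂, c₃+a₁))`. -/
def bd (x : Fin 9 → ℤ) : Fin 3 → ℤ × ℤ :=
  ![(x 0 + x 3, x 4 + x 1), (x 1 + x 5, x 6 + x 2), (x 2 + x 7, x 8 + x 0)]

/-- The vector `v` with all corner entries `1` and all hexagon entries `-1`. -/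
def vtri : Fin 9 → ℤ := ![1, 1, 1, -1, -1, -1, -1, -1, -1]

/-! A vanishing boundary makes every hexagon entry the negative of an adjacent corner entry.
The hexagon relations then say that each corner entry is the mean of the other two, which forces
`3 (c₁ - a₁) = 0`; as `ℤ` has no `3`-torsion, all corner entries agree. -/

lemma bd_eq_zero_iff (x : Fin 9 → ℤ) :
    (∀ i, bd x i = 0) ↔
      x 3 = -x 0 ∧ x 4 = -x 1 ∧ x 5 = -x 1 ∧ x 6 = -x 2 ∧ x 7 = -x 2 ∧ x 8 = -x 0 := by
  simp only [Fin.forall_fin_succ, IsEmpty.forall_iff, bd, Prod.ext_iff, Matrix.cons_val_zero,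
    Matrix.cons_val_one, Matrix.cons_val, Fin.succ_zero_eq_one, Fin.succ_one_eq_two,
    Prod.fst_zero, Prod.snd_zero, and_true]
  omega

lemma corners_eq_of_hex_of_bd_eq_zero {x : Fin 9 → ℤ} (hx : hex x) (hb : ∀ i, bd x i = 0) :
    x 1 = x 0 ∧ x 2 = x 0 := by
  obtain ⟨h₁, h₂, h₃⟩ := hx
  obtain ⟨e₃, e₄, e₅, e₆, e₇, e₈⟩ := (bd_eq_zero_iff x).1 hb
  have hc : 2 * x 2 = x 0 + x 1 := by linarith
  have ha : 2 * x 0 = x 1 + x 2 := by linarith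
  omega

lemma hex_smul_vtri (ℓ : ℤ) : hex (ℓ • vtri) := by
  simp [hex, vtri]

lemma bd_smul_vtri (ℓ : ℤ) (i : Fin 3) : bd (ℓ • vtri) i = 0 :=
  (bd_eq_zero_iff _).2 (by simp [vtri]) i

theorem stmt_0 :
    {x : Fin 9 → ℤ | hex x ∧ ∀ i, bd x i = 0} = {x : Fin 9 → ℤ | ∃ ℓ : ℤ, x = ℓ • vtri} := by
  ext x
  constructor
  · rintro ⟨hx, hb⟩
    obtain ⟨e₁, e₂⟩ := corners_eq_of_hex_of_bd_eq_zero hx hb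
    obtain ⟨e₃, e₄, e₅, e₆, e₇, e₈⟩ := (bd_eq_zero_iff x).1 hb
    refine ⟨x 0, funext fun i => ?_⟩
    fin_cases i <;> simp [vtri, *]
  · rintro ⟨ℓ, rfl⟩
    exact ⟨hex_smul_vtri ℓ, bd_smul_vtri ℓ⟩
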